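/- arXiv:2302.01431 — 4 statements merged into one kernel-verified Lean document; each statement's English description precedes it below -/
import Mathlib

section
/- For an F-quaternion algebra Q, the trace form T_Q is Witt equivalent to <1,1> ⊥ (-2)·N_Q, where N_Q is the norm form of Q. -/
open Quaternion QuadraticMap LinearMap TensorProduct

variable (F : Type) [Field F]

/-- hyperbolic plane ⟨1,-1⟩ -/
noncomputable def hypPlane : QuadraticForm F (Fin 2 → F) :=
  weightedSumSquares F ![(1 : F), -1]

/-- orthogonal sum of m hyperbolic planes -/
noncomputable def hypForm (m : ℕ) : QuadraticForm F (Fin m → Fin 2 → F) :=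
  QuadraticMap.pi fun _ : Fin m => hypPlane F

/-- A quadratic form is hyperbolic if it is isometric to an orthogonal sum of hyperbolic planes. -/
def IsHyperbolic {M : Type} [AddCommGroup M] [Module F M] (φ : QuadraticForm F M) : Prop :=
  ∃ m : ℕ, φ.Equivalent (hypForm F m)

/-- Witt equivalence: the forms become isometric after adding hyperbolic planes. -/
def WittEquiv {M N : Type} [AddCommGroup M] [Module F M] [AddCommGroup N] [Module F N]
    (φ : QuadraticForm F M) (ψ : QuadraticForm F N) : Prop :=
  ∃ m k : ℕ, (φ.prod (hypForm F m)).Equivalent (ψ.prod (hypForm F k))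

/-- Witt trivial: Witt equivalent to the zero-dimensional form. -/
def WittZero {M : Type} [AddCommGroup M] [Module F M] (φ : QuadraticForm F M) : Prop :=
  ∃ m k : ℕ, (φ.prod (hypForm F m)).Equivalent (hypForm F k)

/-- the r-fold orthogonal sum of a quadratic form -/
noncomputable def sumCopies {M : Type} [AddCommGroup M] [Module F M] (r : ℕ)
    (φ : QuadraticForm F M) : QuadraticForm F (Fin r → M) :=
  QuadraticMap.pi fun _ : Fin r => φ

/-- the m-fold Pfister form ⟪a₁,…,a_m⟫, in its diagonalization with entries
indexed by subsets of {1,…,m} -/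
noncomputable def pfister {m : ℕ} (a : Fin m → F) :
    QuadraticForm F (Finset (Fin m) → F) :=
  weightedSumSquares F fun S : Finset (Fin m) => ∏ i ∈ S, (-a i)

/-- the reduced trace form of a (central simple) algebra `A` over `F`:
`x ↦ Trd_A(x²)`, where `Trd_A = Tr_{A/F}/deg A` and `deg A = √(dim_F A)`. -/
noncomputable def traceForm (A : Type) [Ring A] [Algebra F A] : QuadraticForm F A :=
  ((Nat.sqrt (Module.finrank F A) : F)⁻¹) •
    (LinearMap.BilinMap.toQuadraticMap
      ((LinearMap.mul F A).compr₂ ((LinearMap.trace F A) ∘ₗ (LinearMap.mul F A))))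

/-- the trace form of the quaternion algebra ℍ[F,a,b] : `x ↦ Trd(x²) = 2·re(x²)`. -/
noncomputable def quatTraceForm (a b : F) : QuadraticForm F ℍ[F,a,b] :=
  LinearMap.BilinMap.toQuadraticMap
    ((LinearMap.mul F ℍ[F,a,b]).compr₂ ((2 : F) • (QuaternionAlgebra.reₗ a 0 b : ℍ[F,a,b] →ₗ[F] F)))

/-- the Witt class of φ lies in the m-th power of the fundamental ideal:
φ is Witt equivalent to an orthogonal sum of (±1)-scaled m-fold Pfister forms. -/
def InPowI {M : Type} [AddCommGroup M] [Module F M] (m : ℕ) (φ : QuadraticForm F M) : Prop :=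
  ∃ (k : ℕ) (s : Fin k → Fin m → F) (ε : Fin k → ℤˣ),
    (∀ i j, s i j ≠ 0) ∧
    WittEquiv F φ (QuadraticMap.pi fun i : Fin k => ((ε i : ℤ) : F) • pfister F (s i))

/-- `F` has Brauer 2-torsion index at most 2^n: every finite-dimensional central
division algebra `D` over `F` whose Brauer class is 2-torsion (i.e. `D ⊗ D` is split)
satisfies `deg D ≤ 2^n`, i.e. `dim_F D ≤ 4^n`. -/
def BrauerTwoTorsionIndexLE (n : ℕ) : Prop :=
  ∀ (D : Type) [DivisionRing D] [Algebra F D], Module.Finite F D →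
    Algebra.IsCentral F D →
    (∃ m : ℕ, m ≠ 0 ∧ Nonempty ((D ⊗[F] D) ≃ₐ[F] Matrix (Fin m) (Fin m) F)) →
    Module.finrank F D ≤ 4 ^ n


/-! Writing `x = r + x₁i + x₂j + x₃k`, one has `Trd(x²) = 2(r² + a x₁² + b x₂² − ab x₃²)`, so
`T_Q = ⟨2⟩ ⊥ P` and `(−2)·N_Q = ⟨−2⟩ ⊥ P` with the same `P = ⟨2a, 2b, −2ab⟩`. It therefore suffices
that `⟨2⟩ ⊥ ⟨1, −1⟩ ≅ ⟨1, 1, −2⟩`, which is the change of variables `(r, s, t) ↦ (2r + t, s, r + t)`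
of determinant `1`: `(2r + t)² + s² − 2(r + t)² = 2r² + s² − t²`. -/
section

variable {F}

noncomputable def hypFormOneIsometryEquiv : (hypForm F 1).IsometryEquiv (hypPlane F) where
  toLinearEquiv := LinearEquiv.funUnique (Fin 1) F (Fin 2 → F)
  map_app' v := by simp [hypForm, QuadraticMap.pi_apply]

noncomputable def prodHypFormZeroIsometryEquiv {M : Type} [AddCommGroup M] [Module F M]
    (φ : QuadraticForm F M) : (φ.prod (hypForm F 0)).IsometryEquiv φ where
  toLinearEquiv := LinearEquiv.prodUnique
  map_app' v := by simp [hypForm, QuadraticMap.pi_apply]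

theorem WittEquiv.of_equivalent_prod_hypPlane {M N : Type} [AddCommGroup M] [Module F M]
    [AddCommGroup N] [Module F N] {φ : QuadraticForm F M} {ψ : QuadraticForm F N}
    (h : (φ.prod (hypPlane F)).Equivalent ψ) : WittEquiv F φ ψ :=
  ⟨1, 0, (Equivalent.prod (.refl φ) ⟨hypFormOneIsometryEquiv⟩).trans <|
    h.trans ⟨(prodHypFormZeroIsometryEquiv ψ).symm⟩⟩

theorem quatTraceForm_apply (a b : F) (x : ℍ[F,a,b]) :
    quatTraceForm F a b x = 2 * (x.re ^ 2 + a * x.imI ^ 2 + b * x.imJ ^ 2 - a * b * x.imK ^ 2) := by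
  simp only [quatTraceForm, BilinMap.toQuadraticMap_apply, compr₂_apply, mul_apply',
    LinearMap.smul_apply, QuaternionAlgebra.reₗ_apply, QuaternionAlgebra.re_mul, smul_eq_mul]
  ring

def quatTraceHypPlaneEquiv (a b : F) :
    (ℍ[F,a,b] × (Fin 2 → F)) ≃ₗ[F] ((Fin 2 → F) × (Fin 4 → F)) where
  toFun p := (![2 * p.1.re + p.2 1, p.2 0], ![p.1.re + p.2 1, p.1.imI, p.1.imJ, p.1.imK])
  invFun p := (⟨p.1 0 - p.2 0, p.2 1, p.2 2, p.2 3⟩, ![p.1 1, 2 * p.2 0 - p.1 0])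
  map_add' p q := by
    ext i <;> fin_cases i <;> simp <;> ring
  map_smul' c p := by
    ext i <;> fin_cases i <;> simp <;> ring
  left_inv p := by
    ext : 1
    · ext <;> simp; ring
    · ext i; fin_cases i <;> simp; ring
  right_inv p := by
    ext i <;> fin_cases i <;> simp <;> ring

theorem quatTraceForm_prod_hypPlane_equivalent (a b : F) :
    ((quatTraceForm F a b).prod (hypPlane F)).Equivalent
      ((weightedSumSquares F ![(1 : F), 1]).prod
        ((-2 : F) • weightedSumSquares F ![(1 : F), -a, -b, a * b])) := by
  refine ⟨⟨quatTraceHypPlaneEquiv a b, fun p => ?_⟩⟩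
  simp only [quatTraceHypPlaneEquiv, QuadraticMap.prod_apply, _root_.smul_apply, quatTraceForm_apply,
    hypPlane, weightedSumSquares_apply, Fin.sum_univ_two, Fin.sum_univ_four, Matrix.cons_val,
    smul_eq_mul]
  ring

end

theorem stmt2 (a b : F) :
    WittEquiv F (quatTraceForm F a b)
      ((weightedSumSquares F ![(1 : F), 1]).prod
        ((-2 : F) • weightedSumSquares F ![(1 : F), -a, -b, a * b])) :=
  WittEquiv.of_equivalent_prod_hypPlane (quatTraceForm_prod_hypPlane_equivalent a b)
end

section
/- For any two central simple algebras A and B over a field F of characteristic not 2, the trace form of A ⊗_F B is isometric to the tensor product of the trace forms of A and of B: T_{A⊗B} ≅ T_A ⊗ T_B. -/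
open Quaternion QuadraticMap LinearMap TensorProduct

variable (F : Type) [Field F]

/-! The bilinear form `(x, y) ↦ Tr_F(L_{xy})` is multiplicative under `⊗`, because
`L_{a ⊗ b} = L_a ⊗ L_b` and the trace of a tensor product of endomorphisms is the product of the
traces; as `2` is invertible, a quadratic form is determined by its polar form, so the unnormalised
trace forms already satisfy `T_{A ⊗ B} = T_A ⊗ T_B`. The normalising degrees multiply as well,
because the dimension of a central simple algebra is a square: after extending scalars to an
algebraic closure it stays simple (minimal-support argument), hence is a full matrix algebra. -/

namespace TensorProduct

variable {F K A : Type*} [Field F] [DivisionRing K] [Algebra F K] [Ring A] [Algebra F A]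
  {ι : Type*} [DecidableEq ι] (b : Module.Basis ι F K)

theorem equivFinsuppOfBasisLeft_one_tmul_mul (a : A) (y : K ⊗[F] A) (i : ι) :
    equivFinsuppOfBasisLeft b ((1 ⊗ₜ a) * y) i = a * equivFinsuppOfBasisLeft b y i := by
  induction y using TensorProduct.induction_on with
  | zero => simp
  | tmul k a' => simp
  | add y z hy hz => simp [mul_add, hy, hz]

theorem equivFinsuppOfBasisLeft_mul_one_tmul (a : A) (y : K ⊗[F] A) (i : ι) :
    equivFinsuppOfBasisLeft b (y * (1 ⊗ₜ a)) i = equivFinsuppOfBasisLeft b y i * a := by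
  induction y using TensorProduct.induction_on with
  | zero => simp
  | tmul k a' => simp
  | add y z hy hz => simp [add_mul, hy, hz]

theorem exists_eq_tmul_one_of_equivFinsuppOfBasisLeft_mem_center [Algebra.IsCentral F A]
    (y : K ⊗[F] A) (hy : ∀ i, equivFinsuppOfBasisLeft b y i ∈ Subalgebra.center F A) :
    ∃ k : K, y = k ⊗ₜ 1 := by
  choose μ hμ using fun i => (Algebra.IsCentral.mem_center_iff F).mp (hy i)
  refine ⟨(equivFinsuppOfBasisLeft b y).sum fun i _ => μ i • b i, ?_⟩
  conv_lhs => rw [← (equivFinsuppOfBasisLeft b).symm_apply_apply y,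
    equivFinsuppOfBasisLeft_symm_apply]
  rw [Finsupp.sum, Finsupp.sum, TensorProduct.sum_tmul]
  refine Finset.sum_congr rfl fun i _ => ?_
  rw [hμ i, Algebra.algebraMap_eq_smul_one, tmul_smul, smul_tmul']

/-- The coefficients at `i₀` of the elements of `J` supported inside `supp x` form a two-sided
ideal of `A`; it is nonzero, hence contains `1`. -/
theorem exists_mem_support_subset_equivFinsuppOfBasisLeft_eq_one [IsSimpleRing A]
    {J : TwoSidedIdeal (K ⊗[F] A)} {x : K ⊗[F] A} (hx : x ∈ J) {i₀ : ι}
    (hi₀ : equivFinsuppOfBasisLeft b x i₀ ≠ 0) :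
    ∃ y ∈ J, (equivFinsuppOfBasisLeft b y).support ⊆ (equivFinsuppOfBasisLeft b x).support ∧
      equivFinsuppOfBasisLeft b y i₀ = 1 := by
  set c := equivFinsuppOfBasisLeft (N := A) b
  let I : TwoSidedIdeal A := .mk' {a | ∃ y ∈ J, (c y).support ⊆ (c x).support ∧ c y i₀ = a}
    ⟨0, J.zero_mem, by simp, by simp⟩
    (by
      rintro _ _ ⟨y, hy, hyx, rfl⟩ ⟨z, hz, hzx, rfl⟩
      refine ⟨y + z, J.add_mem hy hz, ?_, by simp⟩
      rw [map_add]
      exact Finsupp.support_add.trans (Finset.union_subset hyx hzx))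
    (by
      rintro _ ⟨y, hy, hyx, rfl⟩
      exact ⟨-y, J.neg_mem hy, by simpa using hyx, by simp⟩)
    (by
      rintro a _ ⟨y, hy, hyx, rfl⟩
      refine ⟨(1 ⊗ₜ a) * y, J.mul_mem_left _ _ hy, fun i hi => hyx ?_,
        equivFinsuppOfBasisLeft_one_tmul_mul b a y i₀⟩
      rw [Finsupp.mem_support_iff, equivFinsuppOfBasisLeft_one_tmul_mul] at hi
      exact Finsupp.mem_support_iff.mpr fun h => hi (by rw [h, mul_zero]))
    (by
      rintro _ a ⟨y, hy, hyx, rfl⟩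
      refine ⟨y * (1 ⊗ₜ a), J.mul_mem_right _ _ hy, fun i hi => hyx ?_,
        equivFinsuppOfBasisLeft_mul_one_tmul b a y i₀⟩
      rw [Finsupp.mem_support_iff, equivFinsuppOfBasisLeft_mul_one_tmul] at hi
      exact Finsupp.mem_support_iff.mpr fun h => hi (by rw [h, zero_mul]))
  have hxI : c x i₀ ∈ I := (TwoSidedIdeal.mem_mk' ..).mpr ⟨x, hx, subset_rfl, rfl⟩
  simpa [I] using IsSimpleRing.one_mem_of_ne_zero_mem I hi₀ hxI

/-- The commutator of `x` with `1 ⊗ a` lies in `J` and vanishes at `i₀`, so it has smaller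
support than `x`. -/
theorem equivFinsuppOfBasisLeft_mem_center_of_minimal [Nontrivial A]
    {J : TwoSidedIdeal (K ⊗[F] A)} {x : K ⊗[F] A} (hx : x ∈ J) {i₀ : ι}
    (hx₁ : equivFinsuppOfBasisLeft b x i₀ = 1)
    (hmin : ∀ z ∈ J, (equivFinsuppOfBasisLeft b z).support ⊂
      (equivFinsuppOfBasisLeft b x).support → z = 0) (i : ι) :
    equivFinsuppOfBasisLeft b x i ∈ Subalgebra.center F A := by
  set c := equivFinsuppOfBasisLeft (N := A) b
  refine Subalgebra.mem_center_iff.mpr fun a => ?_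
  set z := (1 ⊗ₜ a) * x - x * (1 ⊗ₜ a)
  have hcz : ∀ j, c z j = a * c x j - c x j * a := fun j => by
    simp only [z, c, map_sub, Finsupp.sub_apply, equivFinsuppOfBasisLeft_one_tmul_mul,
      equivFinsuppOfBasisLeft_mul_one_tmul]
  have hzx : (c z).support ⊂ (c x).support := by
    refine (Finset.ssubset_iff_of_subset fun j hj => ?_).mpr
      ⟨i₀, by simp [hx₁], by simp [hcz, hx₁]⟩
    rw [Finsupp.mem_support_iff, hcz] at hj
    exact Finsupp.mem_support_iff.mpr fun h => hj (by simp [h])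
  have hz : z = 0 := hmin z (J.sub_mem (J.mul_mem_left _ _ hx) (J.mul_mem_right _ _ hx)) hzx
  simpa [hz, sub_eq_zero] using (hcz i).symm

/-- A nonzero element of minimal support in an ideal `J`, rescaled to have a coefficient `1`, is of
the form `k ⊗ 1` with `k ≠ 0`, so `J` contains a unit. -/
theorem isSimpleRing_of_isCentral [Algebra.IsCentral F A] [IsSimpleRing A] :
    IsSimpleRing (K ⊗[F] A) := by
  classical
  let b := Module.Basis.ofVectorSpace F K
  let c := equivFinsuppOfBasisLeft (N := A) b
  have : Nonempty (Module.Basis.ofVectorSpaceIndex F K) := b.index_nonempty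
  have : Nontrivial (K ⊗[F] A) := c.toEquiv.nontrivial
  refine IsSimpleRing.of_eq_bot_or_eq_top fun J => or_iff_not_imp_left.mpr fun hJ => ?_
  obtain ⟨x₀, hx₀J, hx₀⟩ : ∃ x ∈ J, x ≠ 0 := by
    by_contra! h
    exact hJ (eq_bot_iff.mpr fun x hx => (TwoSidedIdeal.mem_bot _).mpr (h x hx))
  obtain ⟨x, ⟨hxJ, hx⟩, hmin⟩ := (measure fun x => (c x).support.card).wf.has_min
    {x | x ∈ J ∧ x ≠ 0} ⟨x₀, hx₀J, hx₀⟩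
  obtain ⟨i₀, hi₀⟩ : (c x).support.Nonempty := by simpa [c] using hx
  obtain ⟨y, hyJ, hyx, hy₁⟩ :=
    exists_mem_support_subset_equivFinsuppOfBasisLeft_eq_one b hxJ
      (Finsupp.mem_support_iff.mp hi₀)
  have hymin : ∀ z ∈ J, (c z).support ⊂ (c y).support → z = 0 := fun z hz hzy =>
    by_contra fun hz₀ => hmin z ⟨hz, hz₀⟩
      ((Finset.card_lt_card hzy).trans_le (Finset.card_le_card hyx))
  obtain ⟨k, rfl⟩ := exists_eq_tmul_one_of_equivFinsuppOfBasisLeft_mem_center b y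
    (equivFinsuppOfBasisLeft_mem_center_of_minimal b hyJ hy₁ hymin)
  have hk : k ≠ 0 := by rintro rfl; simp at hy₁
  have h₁ := J.mul_mem_left (k⁻¹ ⊗ₜ 1) _ hyJ
  rw [Algebra.TensorProduct.tmul_mul_tmul, inv_mul_cancel₀ hk, mul_one,
    ← Algebra.TensorProduct.one_def] at h₁
  exact J.eq_top h₁

end TensorProduct

theorem IsSimpleRing.isSquare_finrank_of_isAlgClosed (K B : Type*) [Field K] [IsAlgClosed K]
    [Ring B] [Algebra K B] [IsSimpleRing B] [FiniteDimensional K B] :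
    IsSquare (Module.finrank K B) := by
  obtain ⟨n, _, ⟨e⟩⟩ := IsSimpleRing.exists_algEquiv_matrix_of_isAlgClosed K B
  exact ⟨n, by simp [e.toLinearEquiv.finrank_eq, Module.finrank_matrix]⟩

theorem Algebra.IsCentral.isSquare_finrank (F A : Type*) [Field F] [Ring A] [Algebra F A]
    [Algebra.IsCentral F A] [IsSimpleRing A] [FiniteDimensional F A] :
    IsSquare (Module.finrank F A) := by
  have := TensorProduct.isSimpleRing_of_isCentral (F := F) (K := AlgebraicClosure F) (A := A)
  simpa using IsSimpleRing.isSquare_finrank_of_isAlgClosed (AlgebraicClosure F)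
    (AlgebraicClosure F ⊗[F] A)

theorem Nat.sqrt_mul_of_isSquare {m n : ℕ} (hm : IsSquare m) (hn : IsSquare n) :
    Nat.sqrt (m * n) = Nat.sqrt m * Nat.sqrt n := by
  obtain ⟨r, rfl⟩ := hm
  obtain ⟨s, rfl⟩ := hn
  rw [mul_mul_mul_comm, Nat.sqrt_eq, Nat.sqrt_eq, Nat.sqrt_eq]

section QuadraticForm

variable {R M₁ M₂ : Type*} [CommRing R] [Invertible (2 : R)] [AddCommGroup M₁] [Module R M₁]
  [AddCommGroup M₂] [Module R M₂]

theorem QuadraticForm.smul_tmul_smul (c d : R) (Q₁ : QuadraticForm R M₁)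
    (Q₂ : QuadraticForm R M₂) : (c • Q₁).tmul (d • Q₂) = (c * d) • Q₁.tmul Q₂ := by
  rw [QuadraticForm.tmul, ← smul_tmul', tmul_smul, map_smul, map_smul, smul_smul]

theorem LinearMap.BilinForm.toQuadraticMap_tmul {B₁ : LinearMap.BilinForm R M₁}
    {B₂ : LinearMap.BilinForm R M₂} (h₁ : B₁.IsSymm) (h₂ : B₂.IsSymm) :
    (B₁.tmul B₂).toQuadraticMap =
      QuadraticForm.tmul B₁.toQuadraticMap B₂.toQuadraticMap := by
  rw [← QuadraticMap.toQuadraticMap_associated R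
      (QuadraticForm.tmul B₁.toQuadraticMap B₂.toQuadraticMap),
    QuadraticForm.associated_tmul,
    QuadraticMap.associated_left_inverse R (LinearMap.BilinForm.isSymm_def.mp h₁),
    QuadraticMap.associated_left_inverse R (LinearMap.BilinForm.isSymm_def.mp h₂)]

end QuadraticForm

section RegularTrace

variable (F : Type*) [Field F]

noncomputable def regularTraceBilin (C : Type*) [Ring C] [Algebra F C] :
    LinearMap.BilinForm F C :=
  (LinearMap.mul F C).compr₂ (LinearMap.trace F C ∘ₗ LinearMap.mul F C)

theorem regularTraceBilin_apply (C : Type*) [Ring C] [Algebra F C] (x y : C) :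
    regularTraceBilin F C x y = LinearMap.trace F C (LinearMap.mulLeft F (x * y)) := rfl

theorem regularTraceBilin_isSymm (C : Type*) [Ring C] [Algebra F C] :
    (regularTraceBilin F C).IsSymm := by
  refine LinearMap.BilinForm.isSymm_def.mpr fun x y => ?_
  rw [regularTraceBilin_apply, regularTraceBilin_apply, LinearMap.mulLeft_mul,
    LinearMap.mulLeft_mul]
  exact LinearMap.trace_mul_comm F (LinearMap.mulLeft F x) (LinearMap.mulLeft F y)

theorem regularTraceBilin_tensorProduct (A B : Type*) [Ring A] [Algebra F A]
    [FiniteDimensional F A] [Ring B] [Algebra F B] [FiniteDimensional F B] :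
    regularTraceBilin F (A ⊗[F] B) = (regularTraceBilin F A).tmul (regularTraceBilin F B) := by
  refine TensorProduct.ext' fun a b => TensorProduct.ext' fun a' b' => ?_
  rw [LinearMap.BilinForm.tensorDistrib_tmul, regularTraceBilin_apply,
    Algebra.TensorProduct.tmul_mul_tmul, LinearMap.mulLeft_tmul, LinearMap.trace_tensorProduct',
    smul_eq_mul, mul_comm, regularTraceBilin_apply, regularTraceBilin_apply]

end RegularTrace

theorem traceForm_eq_smul (A : Type) [Ring A] [Algebra F A] :
    traceForm F A =
      (Nat.sqrt (Module.finrank F A) : F)⁻¹ • (regularTraceBilin F A).toQuadraticMap :=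
  rfl

theorem stmt3 [Invertible (2 : F)] (A B : Type)
    [Ring A] [Algebra F A] [Algebra.IsCentral F A] [IsSimpleRing A] [Module.Finite F A]
    [Ring B] [Algebra F B] [Algebra.IsCentral F B] [IsSimpleRing B] [Module.Finite F B] :
    (traceForm F (A ⊗[F] B)).Equivalent ((traceForm F A).tmul (traceForm F B)) := by
  suffices traceForm F (A ⊗[F] B) = (traceForm F A).tmul (traceForm F B) from
    this ▸ .refl _
  rw [traceForm_eq_smul, traceForm_eq_smul, traceForm_eq_smul, QuadraticForm.smul_tmul_smul,
    ← LinearMap.BilinForm.toQuadraticMap_tmul (regularTraceBilin_isSymm F A)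
      (regularTraceBilin_isSymm F B), ← regularTraceBilin_tensorProduct,
    Module.finrank_tensorProduct,
    Nat.sqrt_mul_of_isSquare (Algebra.IsCentral.isSquare_finrank F A)
      (Algebra.IsCentral.isSquare_finrank F B), Nat.cast_mul, mul_inv]
end

section
/- Let F be a field of characteristic not 2 and a ∈ F* a sum of two squares in F. Then for any b ∈ F*, the quadratic form 2 × <<a,b>> (two copies of the 2-fold Pfister form <1,-a,-b,ab>) is hyperbolic, and <<a,b>> ≅ -1 · <<a,b>>. -/
open Quaternion QuadraticMap LinearMap TensorProduct

variable (F : Type) [Field F]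

/-!
Since `a = x² + y² ≠ 0`, the form `⟨1, -a⟩` represents `-1`, and an explicit `2 × 2` isometry
then gives `⟪a⟫ ≅ -⟪a⟫`. As `⟪a, b⟫ = ⟪a⟫ ⊥ -b⟪a⟫`, also `⟪a, b⟫ ≅ -⟪a, b⟫`. For a diagonal
form `φ = ⟨w₁, …, wₙ⟩` with `φ ≅ -φ` this gives `2 × φ ≅ φ ⊥ -φ ≅ ⊥ᵢ ⟨wᵢ, -wᵢ⟩`, and
`⟨c, -c⟩ ≅ ⟨1, -1⟩` for `c ≠ 0` because `2` is invertible.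
-/

open Matrix

section

variable {F}

theorem QuadraticMap.Equivalent.smul {M N : Type} [AddCommGroup M] [Module F M] [AddCommGroup N]
    [Module F N] {Q : QuadraticForm F M} {Q' : QuadraticForm F N} (h : Q.Equivalent Q') (c : F) :
    (c • Q).Equivalent (c • Q') :=
  let e := h.some
  ⟨{ toLinearEquiv := e.toLinearEquiv
     map_app' := fun m => by simp [e.map_app] }⟩

theorem equivalent_of_mul_eq_one {n : Type} [Fintype n] [DecidableEq n]
    {Q Q' : QuadraticForm F (n → F)} (A B : Matrix n n F) (hAB : A * B = 1)
    (hA : ∀ v, Q' (A *ᵥ v) = Q v) : Q.Equivalent Q' :=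
  ⟨{ toLinearEquiv := A.toLinearEquiv' (invertibleOfRightInverse A B hAB)
     map_app' := hA }⟩

theorem equivalent_pi_const_of_equiv {ι κ M : Type} [Fintype ι] [Fintype κ] [AddCommGroup M]
    [Module F M] (e : ι ≃ κ) (Q : QuadraticForm F M) :
    (pi fun _ : ι => Q).Equivalent (pi fun _ : κ => Q) :=
  ⟨{ toLinearEquiv := LinearEquiv.funCongrLeft F M e.symm
     map_app' := fun v => by simp [e.symm.sum_comp fun i => Q (v i)] }⟩

theorem pi_smul_weightedSumSquares_equivalent {ι κ : Type} [Fintype ι] [Fintype κ]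
    (d : κ → F) (w : ι → F) :
    (pi fun k => d k • weightedSumSquares F w).Equivalent
      (pi fun i => w i • weightedSumSquares F d) :=
  ⟨{ toLinearEquiv := (LinearEquiv.curry F F κ ι).symm ≪≫ₗ
        LinearEquiv.funCongrLeft F F (Equiv.prodComm ι κ) ≪≫ₗ LinearEquiv.curry F F ι κ
     map_app' := fun v => by
      simp only [QuadraticMap.pi_apply, _root_.smul_apply, weightedSumSquares_apply,
        Finset.smul_sum]
      rw [Finset.sum_comm]
      exact Fintype.sum_congr _ _ fun i => Fintype.sum_congr _ _ fun k => by simp; ring }⟩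

theorem neg_one_smul_pi {ι : Type} [Fintype ι] {M : ι → Type} [∀ i, AddCommGroup (M i)]
    [∀ i, Module F (M i)] (Q : ∀ i, QuadraticForm F (M i)) :
    (-1 : F) • pi Q = pi fun i => (-1 : F) • Q i := by
  ext v
  simp [Finset.sum_neg_distrib]

theorem QuadraticMap.Equivalent.equivalent_neg {M N : Type} [AddCommGroup M] [Module F M]
    [AddCommGroup N] [Module F N] {Q : QuadraticForm F M} {Q' : QuadraticForm F N}
    (h : Q.Equivalent Q') (hQ' : Q'.Equivalent ((-1 : F) • Q')) :
    Q.Equivalent ((-1 : F) • Q) :=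
  h.trans (hQ'.trans (h.symm.smul _))

theorem smul_equivalent_neg {M : Type} [AddCommGroup M] [Module F M] {Q : QuadraticForm F M}
    (h : Q.Equivalent ((-1 : F) • Q)) (c : F) : (c • Q).Equivalent ((-1 : F) • c • Q) := by
  rw [smul_comm]
  exact h.smul c

theorem pi_equivalent_neg {ι : Type} [Fintype ι] {M : ι → Type} [∀ i, AddCommGroup (M i)]
    [∀ i, Module F (M i)] {Q : ∀ i, QuadraticForm F (M i)}
    (h : ∀ i, (Q i).Equivalent ((-1 : F) • Q i)) : (pi Q).Equivalent ((-1 : F) • pi Q) := by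
  rw [neg_one_smul_pi]
  exact .pi h

theorem IsHyperbolic.of_equivalent {M N : Type} [AddCommGroup M] [Module F M] [AddCommGroup N]
    [Module F N] {Q : QuadraticForm F M} {Q' : QuadraticForm F N} (h : Q.Equivalent Q')
    (hQ' : IsHyperbolic F Q') : IsHyperbolic F Q :=
  let ⟨m, hm⟩ := hQ'
  ⟨m, h.trans hm⟩

theorem isHyperbolic_pi_hypPlane (ι : Type) [Fintype ι] :
    IsHyperbolic F (pi fun _ : ι => hypPlane F) :=
  ⟨Fintype.card ι, equivalent_pi_const_of_equiv (Fintype.equivFin ι) _⟩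

theorem smul_hypPlane_equivalent (h2 : (2 : F) ≠ 0) {c : F} (hc : c ≠ 0) :
    (c • hypPlane F).Equivalent (hypPlane F) := by
  -- `X = ((c+1)u + (c-1)v)/2`, `Y = ((c-1)u + (c+1)v)/2` satisfy `X - Y = u - v`, `X + Y = c(u + v)`
  refine equivalent_of_mul_eq_one !![(c + 1) / 2, (c - 1) / 2; (c - 1) / 2, (c + 1) / 2]
    !![(1 + c⁻¹) / 2, (c⁻¹ - 1) / 2; (c⁻¹ - 1) / 2, (1 + c⁻¹) / 2] ?_ fun v => ?_
  · ext i j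
    fin_cases i <;> fin_cases j <;> (simp; field_simp; ring)
  · simp [hypPlane, weightedSumSquares_apply, Fin.sum_univ_two, dotProduct]
    field_simp
    ring

theorem isHyperbolic_sumCopies_two_of_equivalent_neg (h2 : (2 : F) ≠ 0) {ι : Type} [Fintype ι]
    {w : ι → F} (hw : ∀ i, w i ≠ 0)
    (h : (weightedSumSquares F w).Equivalent ((-1 : F) • weightedSumSquares F w)) :
    IsHyperbolic F (sumCopies F 2 (weightedSumSquares F w)) := by
  have h_orth : (sumCopies F 2 (weightedSumSquares F w)).Equivalent
      (pi fun j : Fin 2 => ![(1 : F), -1] j • weightedSumSquares F w) :=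
    Equivalent.pi <| Fin.forall_fin_two.mpr ⟨by simpa using .refl _, by simpa using h⟩
  refine .of_equivalent (h_orth.trans (pi_smul_weightedSumSquares_equivalent _ w)) ?_
  exact .of_equivalent (.pi fun i => smul_hypPlane_equivalent h2 (hw i))
    (isHyperbolic_pi_hypPlane ι)

theorem exists_sq_sub_mul_sq_eq_neg_one {a x y : F} (ha : a ≠ 0) (hsum : a = x ^ 2 + y ^ 2) :
    ∃ p r : F, p ^ 2 - a * r ^ 2 = -1 := by
  by_cases hy : y = 0
  · have hx : x ≠ 0 := by rintro rfl; simp_all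
    exact ⟨0, x⁻¹, by subst hsum hy; field_simp; ring⟩
  · exact ⟨x / y, y⁻¹, by subst hsum; field_simp; ring⟩

theorem weightedSumSquares_one_neg_equivalent_neg {a p r : F} (hp : p ^ 2 - a * r ^ 2 = -1) :
    (weightedSumSquares F ![1, -a]).Equivalent ((-1 : F) • weightedSumSquares F ![1, -a]) := by
  refine equivalent_of_mul_eq_one !![p, a * r; r, p] !![-p, a * r; r, -p] ?_ fun v => ?_
  · ext i j
    fin_cases i <;> fin_cases j <;> simp <;> first | ring1 | linear_combination -hp
  · simp [weightedSumSquares_apply, Fin.sum_univ_two, dotProduct]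
    linear_combination (-(v 0 ^ 2 - a * v 1 ^ 2)) * hp

def finsetFinTwoEquiv : Fin 2 × Fin 2 ≃ Finset (Fin 2) where
  toFun p := ![![∅, {0}], ![{1}, {0, 1}]] p.1 p.2
  invFun S := (if 1 ∈ S then 1 else 0, if 0 ∈ S then 1 else 0)
  left_inv := by decide
  right_inv := by decide

theorem pfister_two_equivalent_pi (a b : F) :
    (pfister F ![a, b]).Equivalent
      (pi fun k : Fin 2 => ![1, -b] k • weightedSumSquares F ![1, -a]) :=
  ⟨{ toLinearEquiv := LinearEquiv.funCongrLeft F F finsetFinTwoEquiv ≪≫ₗ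
        LinearEquiv.curry F F (Fin 2) (Fin 2)
     map_app' := fun v => by
      simp only [pfister, weightedSumSquares_apply, ← finsetFinTwoEquiv.sum_comp,
        Fintype.sum_prod_type]
      simp [Fin.sum_univ_two, finsetFinTwoEquiv]
      ring }⟩

theorem pfister_two_equivalent_neg {a p r : F} (hp : p ^ 2 - a * r ^ 2 = -1) (b : F) :
    (pfister F ![a, b]).Equivalent ((-1 : F) • pfister F ![a, b]) :=
  (pfister_two_equivalent_pi a b).equivalent_neg <| pi_equivalent_neg fun _ =>
    smul_equivalent_neg (weightedSumSquares_one_neg_equivalent_neg hp) _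

theorem prod_neg_ne_zero {m : ℕ} {s : Fin m → F} (hs : ∀ i, s i ≠ 0) (S : Finset (Fin m)) :
    ∏ i ∈ S, -s i ≠ 0 :=
  Finset.prod_ne_zero_iff.mpr fun i _ => neg_ne_zero.mpr (hs i)

end

theorem stmt15 (h2 : (2 : F) ≠ 0) (a x y : F) (ha : a ≠ 0) (hsum : a = x ^ 2 + y ^ 2)
    (b : F) (hb : b ≠ 0) :
    IsHyperbolic F (sumCopies F 2 (pfister F ![a, b])) ∧
      (pfister F ![a, b]).Equivalent ((-1 : F) • pfister F ![a, b]) := by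
  obtain ⟨p, r, hp⟩ := exists_sq_sub_mul_sq_eq_neg_one ha hsum
  have hneg := pfister_two_equivalent_neg hp b
  have hw : ∀ i, ![a, b] i ≠ 0 := Fin.forall_fin_two.mpr ⟨ha, hb⟩
  exact ⟨isHyperbolic_sumCopies_two_of_equivalent_neg h2 (prod_neg_ne_zero hw) hneg, hneg⟩
end

section
/- Let F be a field of characteristic not 2 and Q an F-quaternion algebra. Then 4 × T_Q ≡ 4 × N_Q modulo 8 × W F in the Witt ring of F, where T_Q is the trace form and N_Q the norm form of Q. -/
open Quaternion QuadraticMap LinearMap TensorProduct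

variable (F : Type) [Field F]

/-!
Diagonalizing, `T_Q ≅ 2⟨1, a, b, -ab⟩` and `N_Q = ⟨⟨a, b⟩⟩ ≅ ⟨1, -a, -b, ab⟩`. The factor `2`
disappears in `4 × T_Q` because `2 × (2φ) ≅ 2 × φ` (the parallelogram law). With `τ = ⟨a, b, -ab⟩`
the form `τ ⊥ -τ` is hyperbolic, so
`4 × T_Q ⊥ 12 H ≅ 4 × (⟨1⟩ ⊥ τ) ⊥ 4 × (τ ⊥ -τ) ≅ 4 × (⟨1⟩ ⊥ -τ) ⊥ 8 × τ ≅ 4 × N_Q ⊥ 8 × τ`.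
-/

local infix:50 " ≃q " => QuadraticMap.Equivalent

theorem QuadraticMap.map_add_add_map_sub {R M N : Type*} [CommRing R] [AddCommGroup M]
    [Module R M] [AddCommGroup N] [Module R N] (Q : QuadraticMap R M N) (x y : M) :
    Q (x + y) + Q (x - y) = 2 • Q x + 2 • Q y := by
  have h := Q.map_add_add_add_map x y (-y)
  rw [add_neg_cancel_right, add_neg_cancel, Q.map_zero, add_zero, Q.map_neg, neg_add_eq_sub] at h
  rw [← h, two_nsmul, two_nsmul]
  abel

section

variable {F}
variable {M N : Type} [AddCommGroup M] [Module F M] [AddCommGroup N] [Module F N]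

instance {M₁ M₂ M₃ : Type} [AddCommGroup M₁] [Module F M₁] [AddCommGroup M₂] [Module F M₂]
    [AddCommGroup M₃] [Module F M₃] :
    @Trans (QuadraticForm F M₁) (QuadraticForm F M₂) (QuadraticForm F M₃)
      QuadraticMap.Equivalent QuadraticMap.Equivalent QuadraticMap.Equivalent :=
  ⟨QuadraticMap.Equivalent.trans⟩

theorem QuadraticMap.Equivalent.sumCopies {φ : QuadraticForm F M} {ψ : QuadraticForm F N}
    (r : ℕ) (h : φ ≃q ψ) : sumCopies F r φ ≃q sumCopies F r ψ :=
  Equivalent.pi fun _ => h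

theorem sumCopies_add (m n : ℕ) (φ : QuadraticForm F M) :
    sumCopies F (m + n) φ ≃q (sumCopies F m φ).prod (sumCopies F n φ) :=
  ⟨{ toLinearEquiv := (LinearEquiv.funCongrLeft F M finSumFinEquiv).trans
        (LinearEquiv.sumArrowLequivProdArrow _ _ F M)
     map_app' := fun x => by simp [sumCopies, QuadraticMap.pi_apply, Fin.sum_univ_add] }⟩

theorem sumCopies_mul (m n : ℕ) (φ : QuadraticForm F M) :
    sumCopies F (m * n) φ ≃q sumCopies F m (sumCopies F n φ) :=
  ⟨{ toLinearEquiv := (LinearEquiv.funCongrLeft F M finProdFinEquiv).trans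
        (LinearEquiv.curry F M (Fin m) (Fin n))
     map_app' := fun x => by
       simp only [sumCopies, QuadraticMap.pi_apply]
       rw [← Fintype.sum_prod_type']
       exact Fintype.sum_equiv finProdFinEquiv _ _ fun _ => rfl }⟩

theorem sumCopies_prod (r : ℕ) (φ : QuadraticForm F M) (ψ : QuadraticForm F N) :
    sumCopies F r (φ.prod ψ) ≃q (sumCopies F r φ).prod (sumCopies F r ψ) :=
  ⟨{ Equiv.arrowProdEquivProdArrow _ _ _ with
     map_add' := fun _ _ => rfl
     map_smul' := fun _ _ => rfl
     map_app' := fun x => by simp [sumCopies, QuadraticMap.pi_apply, Finset.sum_add_distrib] }⟩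

theorem sumCopies_two_two_smul (h2 : (2 : F) ≠ 0) (φ : QuadraticForm F M) :
    sumCopies F 2 ((2 : F) • φ) ≃q sumCopies F 2 φ :=
  ⟨{ toFun := fun x => ![x 0 + x 1, x 0 - x 1]
     invFun := fun y => ![(2 : F)⁻¹ • (y 0 + y 1), (2 : F)⁻¹ • (y 0 - y 1)]
     map_add' := fun x y => by ext i; fin_cases i <;> simp <;> abel
     map_smul' := fun c x => by ext i; fin_cases i <;> simp [smul_add, smul_sub]
     left_inv := fun x => by ext i; fin_cases i <;> simp <;> match_scalars <;> field_simp <;> ring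
     right_inv := fun y => by ext i; fin_cases i <;> simp <;> match_scalars <;> field_simp <;> ring
     map_app' := fun x => by
       simp [sumCopies, QuadraticMap.pi_apply, QuadraticMap.map_add_add_map_sub] }⟩

theorem sumCopies_mul_two_two_smul (h2 : (2 : F) ≠ 0) (n : ℕ) (φ : QuadraticForm F M) :
    sumCopies F (n * 2) ((2 : F) • φ) ≃q sumCopies F (n * 2) φ :=
  (sumCopies_mul n 2 _).trans
    (((sumCopies_two_two_smul h2 φ).sumCopies n).trans (sumCopies_mul n 2 φ).symm)

theorem prod_hypForm_zero (φ : QuadraticForm F M) : φ.prod (hypForm F 0) ≃q φ :=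
  ⟨{ toLinearEquiv := LinearEquiv.prodUnique
     map_app' := fun x => by simp [hypForm, QuadraticMap.pi_apply] }⟩

theorem weightedSumSquares_prod_equivalent_pi {ι : Type} [Fintype ι] (w w' : ι → F) :
    (weightedSumSquares F w).prod (weightedSumSquares F w') ≃q
      QuadraticMap.pi fun i => weightedSumSquares F ![w i, w' i] :=
  ⟨{ toFun := fun p i => ![p.1 i, p.2 i]
     invFun := fun f => (fun i => f i 0, fun i => f i 1)
     map_add' := fun p q => by ext i j; fin_cases j <;> rfl
     map_smul' := fun c p => by ext i j; fin_cases j <;> rfl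
     left_inv := fun p => rfl
     right_inv := fun f => by ext i j; fin_cases j <;> rfl
     map_app' := fun p => by
       simp [QuadraticMap.pi_apply, Fin.sum_univ_two, Finset.sum_add_distrib] }⟩

/-- The substitution `u + v = c (x + y)`, `u - v = x - y` turns `c x² - c y²` into `u² - v²`. -/
theorem weightedSumSquares_pair_neg_equivalent_hypPlane (h2 : (2 : F) ≠ 0) {c : F} (hc : c ≠ 0) :
    weightedSumSquares F ![c, -c] ≃q hypPlane F :=
  ⟨{ toFun := fun x => ![(c * (x 0 + x 1) + (x 0 - x 1)) / 2, (c * (x 0 + x 1) - (x 0 - x 1)) / 2]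
     invFun := fun y => ![((y 0 + y 1) / c + (y 0 - y 1)) / 2, ((y 0 + y 1) / c - (y 0 - y 1)) / 2]
     map_add' := fun x y => by ext i; fin_cases i <;> simp <;> ring
     map_smul' := fun r x => by ext i; fin_cases i <;> simp <;> ring
     left_inv := fun x => by ext i; fin_cases i <;> simp <;> field_simp <;> ring
     right_inv := fun y => by ext i; fin_cases i <;> simp <;> field_simp <;> ring
     map_app' := fun x => by
       simp [hypPlane, Fin.sum_univ_two]
       field_simp
       ring }⟩

theorem weightedSumSquares_prod_neg_equivalent_hypForm (h2 : (2 : F) ≠ 0) {n : ℕ}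
    {w : Fin n → F} (hw : ∀ i, w i ≠ 0) :
    (weightedSumSquares F w).prod (weightedSumSquares F (-w)) ≃q hypForm F n :=
  (weightedSumSquares_prod_equivalent_pi w (-w)).trans
    (Equivalent.pi fun i => weightedSumSquares_pair_neg_equivalent_hypPlane h2 (hw i))

theorem quatTraceForm_equivalent (a b : F) :
    quatTraceForm F a b ≃q (2 : F) • sq.prod (weightedSumSquares F ![a, b, -(a * b)]) :=
  ⟨{ toLinearEquiv :=
       (QuaternionAlgebra.linearEquivTuple a 0 b).trans (Fin.consLinearEquiv F fun _ => F).symm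
     map_app' := fun x => by
       simp [quatTraceForm, Fin.sum_univ_succ, -mul_eq_mul_left_iff]
       ring }⟩

theorem pfister_two_equivalent (a b : F) :
    pfister F ![a, b] ≃q sq.prod (weightedSumSquares F (-![a, b, -(a * b)])) := by
  let e : Fin 4 ≃ Finset (Fin 2) := Equiv.ofBijective ![∅, {0}, {1}, {0, 1}] (by decide)
  refine ⟨{ toLinearEquiv :=
              (LinearEquiv.funCongrLeft F F e).trans (Fin.consLinearEquiv F fun _ => F).symm
            map_app' := fun x => ?_ }⟩
  simp only [pfister, weightedSumSquares_apply]
  rw [← Fintype.sum_equiv e (fun i => _) _ fun _ => rfl]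
  simp [Fin.sum_univ_succ, Fin.tail, e]

end

theorem stmt19 (h2 : (2 : F) ≠ 0) (a b : F) (ha : a ≠ 0) (hb : b ≠ 0) :
    ∃ (t : ℕ) (d : Fin t → F), (∀ i, d i ≠ 0) ∧
      WittEquiv F (sumCopies F 4 (quatTraceForm F a b))
        ((sumCopies F 4 (pfister F ![a, b])).prod
          (sumCopies F 8 (weightedSumSquares F d))) := by
  set d : Fin 3 → F := ![a, b, -(a * b)]
  have hd : ∀ i, d i ≠ 0 := by
    intro i; fin_cases i <;> simp [d, ha, hb]
  set τ := weightedSumSquares F d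
  set τ' := weightedSumSquares F (-d)
  have hT : sumCopies F 4 (quatTraceForm F a b) ≃q sumCopies F 4 (sq.prod τ) :=
    ((quatTraceForm_equivalent a b).sumCopies 4).trans (sumCopies_mul_two_two_smul h2 2 _)
  have hH : hypForm F 12 ≃q sumCopies F 4 (τ.prod τ') :=
    (sumCopies_mul 4 3 (hypPlane F)).trans
      ((weightedSumSquares_prod_neg_equivalent_hypForm h2 hd).symm.sumCopies 4)
  refine ⟨3, d, hd, 12, 0, ?_⟩
  calc (sumCopies F 4 (quatTraceForm F a b)).prod (hypForm F 12)
    _ ≃q (sumCopies F 4 (sq.prod τ)).prod (sumCopies F 4 (τ.prod τ')) := hT.prod hH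
    _ ≃q sumCopies F 4 ((sq.prod τ).prod (τ.prod τ')) := (sumCopies_prod 4 _ _).symm
    _ ≃q sumCopies F 4 ((sq.prod τ).prod (τ'.prod τ)) :=
        ((Equivalent.refl _).prod ⟨IsometryEquiv.prodComm _ _⟩).sumCopies 4
    _ ≃q sumCopies F 4 ((sq.prod τ').prod (τ.prod τ)) :=
        Equivalent.sumCopies 4 ⟨IsometryEquiv.prodProdProdComm _ _ _ _⟩
    _ ≃q (sumCopies F 4 (sq.prod τ')).prod (sumCopies F (4 + 4) τ) :=
        (sumCopies_prod 4 _ _).trans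
          ((Equivalent.refl _).prod ((sumCopies_prod 4 τ τ).trans (sumCopies_add 4 4 τ).symm))
    _ ≃q ((sumCopies F 4 (pfister F ![a, b])).prod (sumCopies F 8 τ)).prod (hypForm F 0) :=
        (((pfister_two_equivalent a b).symm.sumCopies 4).prod (.refl _)).trans
          (prod_hypForm_zero _).symm
end
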